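/- arXiv:2010.10021 — 5 statements merged into one kernel-verified Lean document; each statement's English description precedes it below -/
import Mathlib

section
/- Let a be a generator of the cyclic group 𝔽₄ˣ. Then the matrices A = [[0,1],[1,a]] and B = [[0,1],[1,a²]] both lie in SL₂(𝔽₄), both have order 5, and they are not conjugate to each other in SL₂(𝔽₄). -/
/-!
A generator `a` of `𝔽₄ˣ` is a primitive cube root of unity, and so is `a²`; hence both are roots
of `t² + t + 1`. For such a `t` in characteristic 2, the matrix `[[0,1],[1,t]]` has determinant
`-1 = 1` and fifth power `1`, and it is not the identity, so it has order 5. The two matrices are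
not conjugate because conjugate matrices have equal traces, while `a ≠ a²`.
-/

open Matrix

theorem Matrix.trace_eq_of_isConj {n R : Type*} [Fintype n] [DecidableEq n] [CommRing R]
    {M N : Matrix n n R} (h : IsConj M N) : trace M = trace N := by
  obtain ⟨c, hc⟩ := h
  rw [← trace_units_conj c M, hc.eq, mul_assoc, Units.mul_inv, mul_one]

theorem Matrix.SpecialLinearGroup.trace_eq_of_isConj {n R : Type*} [Fintype n] [DecidableEq n]
    [CommRing R] {A B : SpecialLinearGroup n R} (h : IsConj A B) :
    trace (A : Matrix n n R) = trace (B : Matrix n n R) :=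
  Matrix.trace_eq_of_isConj (SpecialLinearGroup.coeMonoidHom.map_isConj h)

theorem Matrix.SpecialLinearGroup.orderOf_coe {n R : Type*} [Fintype n] [DecidableEq n]
    [CommRing R] (A : SpecialLinearGroup n R) : orderOf (A : Matrix n n R) = orderOf A :=
  orderOf_injective _ coeMonoidHom_injective A

section CharTwo

variable {R : Type*} [CommRing R] [CharP R 2]

theorem det_zero_one_one_of_charTwo (t : R) :
    (!![0, 1; 1, t] : Matrix (Fin 2) (Fin 2) R).det = 1 := by
  simp [det_fin_two_of, CharTwo.neg_eq]

theorem pow_five_zero_one_one_of_charTwo {t : R} (ht : t ^ 2 + t + 1 = 0) :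
    (!![0, 1; 1, t] : Matrix (Fin 2) (Fin 2) R) ^ 5 = 1 := by
  simp only [pow_succ, pow_zero, one_mul, mul_fin_two, one_fin_two, EmbeddingLike.apply_eq_iff_eq,
    vecCons_inj, and_true]
  grind

theorem orderOf_zero_one_one_of_charTwo {t : R} (ht : t ^ 2 + t + 1 = 0) :
    orderOf (!![0, 1; 1, t] : Matrix (Fin 2) (Fin 2) R) = 5 := by
  have : Fact (Nat.Prime 5) := ⟨by norm_num⟩
  have : Nontrivial R := CharP.nontrivial_of_char_ne_one (v := 2) (by norm_num)
  refine orderOf_eq_prime (pow_five_zero_one_one_of_charTwo ht) fun h ↦ ?_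
  simpa using congrFun (congrFun h 0) 0

end CharTwo

theorem IsPrimitiveRoot.sq_add_self_add_one {R : Type*} [CommRing R] [IsDomain R] {ζ : R}
    (hζ : IsPrimitiveRoot ζ 3) : ζ ^ 2 + ζ + 1 = 0 := by
  have h := hζ.geom_sum_eq_zero (by norm_num)
  simp only [Finset.sum_range_succ, Finset.sum_range_zero, pow_zero, pow_one, zero_add] at h
  linear_combination h

theorem isPrimitiveRoot_of_forall_mem_zpowers {G₀ : Type*} [CommGroupWithZero G₀] {a : G₀ˣ}
    (ha : ∀ x : G₀ˣ, x ∈ Subgroup.zpowers a) : IsPrimitiveRoot (a : G₀) (Nat.card G₀ - 1) := by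
  rw [IsPrimitiveRoot.coe_units_iff, ← Nat.card_units, ← orderOf_eq_card_of_forall_mem_zpowers ha]
  exact IsPrimitiveRoot.orderOf a

/-- If `a` generates `𝔽₄ˣ`, then `A = [[0,1],[1,a]]` and `B = [[0,1],[1,a²]]` lie in
`SL₂(𝔽₄)`, have order 5, and are not conjugate to each other in `SL₂(𝔽₄)`. -/
theorem order_five_classes_in_sl2_F4 (a : (GaloisField 2 2)ˣ)
    (ha : ∀ x : (GaloisField 2 2)ˣ, x ∈ Subgroup.zpowers a) :
    (!![(0 : GaloisField 2 2), 1; 1, (a : GaloisField 2 2)]).det = 1 ∧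
    (!![(0 : GaloisField 2 2), 1; 1, (a : GaloisField 2 2) ^ 2]).det = 1 ∧
    ∀ (A B : Matrix.SpecialLinearGroup (Fin 2) (GaloisField 2 2)),
      (A : Matrix (Fin 2) (Fin 2) (GaloisField 2 2))
          = !![(0 : GaloisField 2 2), 1; 1, (a : GaloisField 2 2)] →
      (B : Matrix (Fin 2) (Fin 2) (GaloisField 2 2))
          = !![(0 : GaloisField 2 2), 1; 1, (a : GaloisField 2 2) ^ 2] →
      orderOf A = 5 ∧ orderOf B = 5 ∧ ¬ IsConj A B := by
  have hζ : IsPrimitiveRoot (a : GaloisField 2 2) 3 := by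
    simpa [GaloisField.card 2 2 two_ne_zero] using isPrimitiveRoot_of_forall_mem_zpowers ha
  have hζ2 : IsPrimitiveRoot ((a : GaloisField 2 2) ^ 2) 3 := hζ.pow_of_coprime 2 (by decide)
  refine ⟨det_zero_one_one_of_charTwo _, det_zero_one_one_of_charTwo _,
    fun A B hA hB ↦ ⟨?_, ?_, fun hAB ↦ ?_⟩⟩
  · rw [← SpecialLinearGroup.orderOf_coe, hA]
    exact orderOf_zero_one_one_of_charTwo hζ.sq_add_self_add_one
  · rw [← SpecialLinearGroup.orderOf_coe, hB]
    exact orderOf_zero_one_one_of_charTwo hζ2.sq_add_self_add_one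
  · have htrace := SpecialLinearGroup.trace_eq_of_isConj hAB
    rw [hA, hB, trace_fin_two_of, trace_fin_two_of, zero_add, zero_add] at htrace
    have := hζ.pow_inj (i := 1) (j := 2) (by norm_num) (by norm_num) ((pow_one _).trans htrace)
    omega
end

section
/- Let H be a subgroup of the symmetric group S₆ which is isomorphic as an abstract group to the symmetric group S₅. Then H acts transitively on the six letters if and only if H contains a permutation of cycle type (3,3) (i.e. a product of two disjoint 3-cycles). -/
/-!
Let `H ≤ S₆` with `H ≅ S₅`, so `|H| = 120`. If `H` is transitive, a point stabiliser has
order `120 / 6 = 20`, prime to `3`; hence an element of order `3` of `H` (Cauchy) fixes no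
point and is a product of two disjoint `3`-cycles. Conversely, an element of order `5` of `H`
is a `5`-cycle, so `H` has an orbit containing five of the six points; a fixed-point-free
element of type `(3,3)` moves the remaining point into that orbit.
-/

open Equiv Equiv.Perm Finset MulAction

theorem Subgroup.isPretransitive_iff_forall_exists {α : Type*} (H : Subgroup (Perm α)) :
    IsPretransitive H α ↔ ∀ i j : α, ∃ σ ∈ H, σ i = j := by
  refine ⟨fun h i j => ?_, fun h => ⟨fun i j => ?_⟩⟩
  · obtain ⟨g, hg⟩ := h.exists_smul_eq i j
    exact ⟨g, g.2, hg⟩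
  · obtain ⟨σ, hσ, hσij⟩ := h i j
    exact ⟨⟨σ, hσ⟩, hσij⟩

theorem MulAction.orderOf_mul_card_dvd_of_smul_eq {G X : Type*} [Group G] [MulAction G X]
    [IsPretransitive G X] {g : G} {x : X} (hx : g • x = x) :
    orderOf g * Nat.card X ∣ Nat.card G := by
  rw [← (stabilizer G x).card_mul_index, index_stabilizer_of_transitive,
    ← Subgroup.orderOf_mk g (mem_stabilizer_iff.mpr hx)]
  exact mul_dvd_mul_right (orderOf_dvd_natCard _) _

namespace Equiv.Perm

variable {α : Type*} [Fintype α] [DecidableEq α]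

theorem cycleType_eq_replicate_of_prime_order {σ : Perm α} (hσ : (orderOf σ).Prime) :
    σ.cycleType = Multiset.replicate (#σ.support / orderOf σ) (orderOf σ) := by
  obtain ⟨n, hn⟩ := cycleType_prime_order hσ
  rw [hn, ← sum_cycleType, hn, Multiset.sum_replicate, smul_eq_mul,
    Nat.mul_div_cancel _ (orderOf_pos σ)]

theorem support_eq_univ_iff {σ : Perm α} : σ.support = univ ↔ ∀ x, σ x ≠ x := by
  simp only [eq_univ_iff_forall, mem_support]

theorem isPretransitive_of_isCycle_of_card_support_add_one {H : Subgroup (Perm α)} {τ : Perm α}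
    (hτH : τ ∈ H) (hτ : τ.IsCycle) (hτcard : #τ.support + 1 = Fintype.card α)
    (hH : ∀ x, ∃ g ∈ H, g x ≠ x) : IsPretransitive H α := by
  obtain ⟨x₀, hx₀⟩ := hτ.nonempty_support
  have hcycle : ∀ y ∈ τ.support, ∃ g : H, g • x₀ = y := fun y hy => by
    obtain ⟨n, hn⟩ := hτ.sameCycle (mem_support.mp hx₀) (mem_support.mp hy)
    exact ⟨⟨τ ^ n, H.zpow_mem hτH n⟩, hn⟩
  have hfixed : ∀ y z, y ∉ τ.support → z ∉ τ.support → y = z := fun y z hy hz => by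
    have hcompl : #τ.supportᶜ ≤ 1 := by rw [card_compl]; omega
    exact card_le_one.mp hcompl y (mem_compl.mpr hy) z (mem_compl.mpr hz)
  rw [isPretransitive_iff_base x₀]
  intro y
  by_cases hy : y ∈ τ.support
  · exact hcycle y hy
  · obtain ⟨g, hgH, hgy⟩ := hH y
    have hgy' : g y ∈ τ.support := by_contra fun h => hgy (hfixed _ _ h hy)
    obtain ⟨h, hh⟩ := hcycle _ hgy'
    exact ⟨⟨g, hgH⟩⁻¹ * h, by rw [mul_smul, hh]; exact g.symm_apply_apply y⟩

end Equiv.Perm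

/-- A subgroup of `S₆` abstractly isomorphic to `S₅` is transitive on the six letters
iff it contains a permutation of cycle type `(3,3)`. -/
theorem s5_subgroup_of_s6_transitive_iff_contains_33
    (H : Subgroup (Equiv.Perm (Fin 6)))
    (hiso : Nonempty (H ≃* Equiv.Perm (Fin 5))) :
    (∀ i j : Fin 6, ∃ σ ∈ H, σ i = j) ↔
      ∃ σ ∈ H, Equiv.Perm.cycleType σ = {3, 3} := by
  obtain ⟨e⟩ := hiso
  have hcard : Nat.card H = 120 := by
    rw [Nat.card_congr e.toEquiv, Nat.card_perm, Nat.card_fin]; rfl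
  rw [← Subgroup.isPretransitive_iff_forall_exists]
  constructor
  · intro _
    have : Fact (Nat.Prime 3) := ⟨by norm_num⟩
    obtain ⟨g, hg⟩ := exists_prime_orderOf_dvd_card' (G := H) 3 (by rw [hcard]; norm_num)
    have hfree : (g : Perm (Fin 6)).support = univ := support_eq_univ_iff.mpr fun x hx => by
      have hdvd := orderOf_mul_card_dvd_of_smul_eq (g := g) hx
      rw [hg, hcard, Nat.card_eq_fintype_card, Fintype.card_fin] at hdvd
      norm_num at hdvd
    refine ⟨g, g.2, ?_⟩
    rw [cycleType_eq_replicate_of_prime_order, hfree, Subgroup.orderOf_coe, hg]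
    · rfl
    · rw [Subgroup.orderOf_coe, hg]; norm_num
  · rintro ⟨σ, hσH, hσ⟩
    have : Fact (Nat.Prime 5) := ⟨by norm_num⟩
    obtain ⟨τ, hτ⟩ := exists_prime_orderOf_dvd_card' (G := H) 5 (by rw [hcard]; norm_num)
    rw [← Subgroup.orderOf_coe] at hτ
    have hcyc : (τ : Perm (Fin 6)).IsCycle := isCycle_of_prime_order' (by rw [hτ]; norm_num)
      (by rw [hτ]; simp)
    have hσfree : σ.support = univ := eq_univ_of_card _ (by rw [← sum_cycleType, hσ]; rfl)
    refine isPretransitive_of_isCycle_of_card_support_add_one τ.2 hcyc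
      (by rw [← hcyc.orderOf, hτ]; simp) fun x => ⟨σ, hσH, support_eq_univ_iff.mp hσfree x⟩
end

section
/- Let H be a subgroup of the symmetric group S₆ which is isomorphic as an abstract group to the symmetric group S₅. If H is not transitive on the six letters, then H has a fixed point: there exists i ∈ Fin 6 such that σ(i) = i for every σ ∈ H. -/
/-! Suppose `H ≅ S₅` acts on six letters with neither a single orbit nor a fixed point. An orbit
of five letters would leave the sixth one fixed, so every orbit has at most four letters and every
point stabiliser has index less than five. Such a subgroup of `S₅` contains `A₅`: its normal core
has index dividing `4!`, hence is a nontrivial normal subgroup of `S₅`. So the copy of `A₅` in `H`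
fixes every letter, which is absurd for a nontrivial group of permutations. -/

open Equiv MulAction Subgroup

open scoped Nat

theorem Subgroup.index_normalCore_dvd_factorial {G : Type*} [Group G] (H : Subgroup G)
    [H.FiniteIndex] : H.normalCore.index ∣ H.index ! := by
  rw [normalCore_eq_ker, index_ker, index_eq_card, ← Nat.card_perm]
  exact card_subgroup_dvd_card _

theorem Equiv.Perm.alternatingGroup_le_of_index_lt_card {α : Type*} [Fintype α] [DecidableEq α]
    (hα : 5 ≤ Nat.card α) {K : Subgroup (Perm α)} (hK : K.index < Nat.card α) :
    alternatingGroup α ≤ K := by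
  have hcore : K.normalCore.index < (Nat.card α)! :=
    (Nat.le_of_dvd (Nat.factorial_pos _) K.index_normalCore_dvd_factorial).trans_lt
      ((Nat.factorial_lt (Nat.pos_of_ne_zero K.index_ne_zero_of_finite)).mpr hK)
  have hcard : Nat.card K.normalCore * K.normalCore.index = (Nat.card α)! := by
    rw [card_mul_index, Nat.card_perm]
  have : Nontrivial K.normalCore := by
    rw [← Finite.one_lt_card_iff_nontrivial]
    by_contra! h
    interval_cases Nat.card K.normalCore <;> omega
  exact (alternatingGroup_le_of_normal hα this).trans K.normalCore_le

theorem MulAction.ncard_orbit_add_two_le {G α : Type*} [Group G] [MulAction G α] [Finite α]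
    (htrans : ¬ IsPretransitive G α) (hmoved : ∀ a : α, ∃ g : G, g • a ≠ a) (a : α) :
    (orbit G a).ncard + 2 ≤ Nat.card α := by
  have hlt : (orbit G a).ncard < Nat.card α :=
    Set.ncard_lt_card ((isPretransitive_iff_orbit_eq_univ a).not.mp htrans)
  suffices (orbit G a).ncard + 1 ≠ Nat.card α by omega
  intro h
  obtain ⟨b, hb⟩ : ∃ b, (orbit G a)ᶜ = {b} := by
    rw [← Set.ncard_eq_one]
    have := Set.ncard_add_ncard_compl (orbit G a)
    omega
  obtain ⟨g, hg⟩ := hmoved b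
  have hb' : b ∉ orbit G a := by simp [← Set.mem_compl_iff, hb]
  have hgb : g • b ∈ (orbit G a)ᶜ := fun hgb =>
    hb' (orbit_eq_iff.mp ((orbit_smul g b).symm.trans (orbit_eq_iff.mpr hgb)))
  exact hg (by simpa [hb] using hgb)

/-- A subgroup of `S₆` abstractly isomorphic to `S₅` that is not transitive on the six
letters has a fixed point. -/
theorem s5_subgroup_of_s6_not_transitive_has_fixed_point
    (H : Subgroup (Equiv.Perm (Fin 6)))
    (hiso : Nonempty (H ≃* Equiv.Perm (Fin 5)))
    (hnt : ¬ ∀ i j : Fin 6, ∃ σ ∈ H, σ i = j) :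
    ∃ i : Fin 6, ∀ σ ∈ H, σ i = i := by
  obtain ⟨f⟩ := hiso
  by_contra! hmoved
  have htrans : ¬ IsPretransitive H (Fin 6) := fun h =>
    hnt fun i j => (exists_smul_eq H i j).elim fun σ hσ => ⟨σ, σ.2, hσ⟩
  have hmoved' (i : Fin 6) : ∃ σ : H, σ • i ≠ i :=
    (hmoved i).elim fun σ ⟨hσ, hσi⟩ => ⟨⟨σ, hσ⟩, hσi⟩
  have hA₅ (i : Fin 6) (x : Perm (Fin 5)) (hx : x ∈ alternatingGroup (Fin 5)) :
      f.symm x ∈ stabilizer H i := by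
    have hidx : ((stabilizer H i).map (f : H →* Perm (Fin 5))).index < Nat.card (Fin 5) := by
      have := ncard_orbit_add_two_le htrans hmoved' i
      rw [index_map_equiv, index_stabilizer]
      simp only [Nat.card_eq_fintype_card, Fintype.card_fin] at this ⊢
      omega
    exact mem_map_equiv.mp (Perm.alternatingGroup_le_of_index_lt_card (by simp) hidx hx)
  obtain ⟨x, hx⟩ := exists_ne (1 : alternatingGroup (Fin 5))
  have hx1 : f.symm x = 1 := Subtype.ext (Equiv.ext fun i => hA₅ i x x.2)
  exact hx (Subtype.ext (f.symm.map_eq_one_iff.mp hx1))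
end

section
/- Let H be a subgroup of Sp₄(𝔽₂) which is isomorphic as an abstract group to S₅. Then exactly one of the following holds: every element of H of order 3 or of order 6 has matrix trace 0, or every element of H of order 3 or of order 6 has matrix trace 1. -/
/-!
The elements of order 3 in `S₅` are the 3-cycles, which form a single conjugacy class, so the
trace, a class function, is constant on the elements of order 3 of `H`. Over `𝔽₂` one has
`tr (X ^ 2) = (tr X) ^ 2 = tr X`, and an element of order 6 squares to one of order 3, so the trace
takes a single value on all elements of order 3 or 6 of `H`; as such elements exist, exactly one
of the two alternatives holds.
-/

open Matrix

namespace Equiv.Perm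

variable {α : Type*} [Fintype α] [DecidableEq α]

theorem cycleType_eq_singleton_of_orderOf_eq_prime {σ : Perm α} {p : ℕ} (hp : p.Prime)
    (hσ : orderOf σ = p) (hα : Fintype.card α < 2 * p) : σ.cycleType = {p} := by
  obtain ⟨n, hn⟩ := cycleType_prime_order (hσ ▸ hp)
  have hsum : p + n * p ≤ Fintype.card α := by
    simpa [hn, hσ] using σ.sum_cycleType_le
  obtain rfl : n = 0 := by nlinarith [hp.pos]
  rw [hn, hσ]
  rfl

theorem isConj_of_orderOf_eq_prime {σ τ : Perm α} {p : ℕ} (hp : p.Prime)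
    (hσ : orderOf σ = p) (hτ : orderOf τ = p) (hα : Fintype.card α < 2 * p) :
    IsConj σ τ := by
  rw [isConj_iff_cycleType_eq, cycleType_eq_singleton_of_orderOf_eq_prime hp hσ hα,
    cycleType_eq_singleton_of_orderOf_eq_prime hp hτ hα]

end Equiv.Perm

theorem MulEquiv.isConj_of_orderOf_eq_prime {G α : Type*} [Group G] [Fintype α]
    (e : G ≃* Equiv.Perm α) {x y : G} {p : ℕ} (hp : p.Prime) (hx : orderOf x = p)
    (hy : orderOf y = p) (hα : Fintype.card α < 2 * p) : IsConj x y := by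
  classical
  have h :=
    Equiv.Perm.isConj_of_orderOf_eq_prime hp (e.orderOf_eq x ▸ hx) (e.orderOf_eq y ▸ hy) hα
  simpa using e.symm.toMonoidHom.map_isConj h

namespace Matrix

variable {n R : Type*} [Fintype n] [DecidableEq n] [CommSemiring R]

theorem trace_eq_of_isConj_s11 {A B : Matrix n n R} (h : IsConj A B) : trace A = trace B := by
  obtain ⟨u, hu⟩ := h
  rw [← trace_units_conj u A, hu.eq, mul_assoc, Units.mul_inv, mul_one]

end Matrix

theorem ZMod.trace_sq_eq_trace {n : Type*} [Fintype n] [DecidableEq n]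
    (M : Matrix n n (ZMod 2)) : trace (M ^ 2) = trace M := by
  rw [ZMod.trace_pow_card, ZMod.pow_card]

theorem trace_eq_of_orderOf_eq_three_or_six {G α n : Type*} [Group G] [Fintype α] [Fintype n]
    [DecidableEq n] (e : G ≃* Equiv.Perm α) (hα : Fintype.card α < 6)
    (f : G →* Matrix n n (ZMod 2)) {x y : G} (hx : orderOf x = 3 ∨ orderOf x = 6)
    (hy : orderOf y = 3) : trace (f x) = trace (f y) := by
  have h3 : ∀ z : G, orderOf z = 3 → trace (f z) = trace (f y) := fun z hz ↦
    trace_eq_of_isConj_s11 (f.map_isConj (e.isConj_of_orderOf_eq_prime Nat.prime_three hz hy hα))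
  rcases hx with hx | hx
  · exact h3 x hx
  · have hsq : orderOf (x ^ 2) = 3 := by rw [orderOf_pow' x two_ne_zero, hx]; rfl
    rw [← ZMod.trace_sq_eq_trace, ← map_pow, h3 _ hsq]

theorem ZMod.xor_forall_eq_zero_forall_eq_one {ι : Type*} {p q : ι → Prop} {f : ι → ZMod 2}
    (c : ZMod 2) (hf : ∀ i, p i → q i → f i = c) (hne : ∃ i, p i ∧ q i) :
    Xor (∀ i, p i → q i → f i = 0) (∀ i, p i → q i → f i = 1) := by
  obtain ⟨i, hpi, hqi⟩ := hne
  have hfi := hf i hpi hqi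
  rcases (by decide : ∀ c : ZMod 2, c = 0 ∨ c = 1) c with rfl | rfl
  · exact Or.inl ⟨hf, fun h ↦ zero_ne_one (hfi.symm.trans (h i hpi hqi))⟩
  · exact Or.inr ⟨hf, fun h ↦ zero_ne_one ((h i hpi hqi).symm.trans hfi)⟩

/-- For a subgroup `H` of `Sp₄(𝔽₂)` abstractly isomorphic to `S₅`, exactly one of the
following holds: all elements of `H` of order 3 or 6 have trace 0, or all elements of `H`
of order 3 or 6 have trace 1.  (These are the two types `S₅(a)` and `S₅(b)`.) -/
theorem s5_subgroup_of_sp4_trace_dichotomy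
    (H : Subgroup (Matrix.symplecticGroup (Fin 2) (ZMod 2)))
    (hiso : Nonempty (H ≃* Equiv.Perm (Fin 5))) :
    Xor'
      (∀ X : Matrix.symplecticGroup (Fin 2) (ZMod 2), X ∈ H →
        (orderOf X = 3 ∨ orderOf X = 6) →
        Matrix.trace (X : Matrix (Fin 2 ⊕ Fin 2) (Fin 2 ⊕ Fin 2) (ZMod 2)) = 0)
      (∀ X : Matrix.symplecticGroup (Fin 2) (ZMod 2), X ∈ H →
        (orderOf X = 3 ∨ orderOf X = 6) →
        Matrix.trace (X : Matrix (Fin 2 ⊕ Fin 2) (Fin 2 ⊕ Fin 2) (ZMod 2)) = 1) := by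
  obtain ⟨e⟩ := hiso
  let f : H →* Matrix (Fin 2 ⊕ Fin 2) (Fin 2 ⊕ Fin 2) (ZMod 2) :=
    (Matrix.symplecticGroup (Fin 2) (ZMod 2)).subtype.comp H.subtype
  let y : H := e.symm (Fin.cycleRange 2)
  have hy : orderOf y = 3 := by
    rw [e.symm.orderOf_eq]
    exact (Fin.isThreeCycle_cycleRange_two (n := 2)).orderOf
  refine ZMod.xor_forall_eq_zero_forall_eq_one (trace (f y)) (fun X hX hord ↦ ?_)
    ⟨y, y.2, Or.inl (by rwa [Subgroup.orderOf_coe])⟩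
  exact trace_eq_of_orderOf_eq_three_or_six e (by decide) f
    (x := ⟨X, hX⟩) (by rwa [Subgroup.orderOf_mk]) hy
end

section
/- Over 𝔽₂, consider the matrices J = [[0,0,0,1],[0,0,1,0],[0,1,0,0],[1,0,0,0]] and M = [[0,1,0,0],[1,0,0,0],[0,0,0,1],[0,0,1,0]]. Then J and M are conjugate in GL₄(𝔽₂) (there exists P ∈ GL₄(𝔽₂) with P·J·P⁻¹ = M), but they are not conjugate by any element of the symplectic group Sp₄(𝔽₂) defined by the form J (there is no P with ᵀP·J·P = J and P·J·P⁻¹ = M). -/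
/-!
Both matrices are permutation matrices of fixed-point-free involutions, so they are conjugate
by a permutation matrix. For the symplectic obstruction, attach to `X` the quadratic form
`x ↦ ω(x, X x) = xᵀ (J X) x`, where `ω(x, y) = xᵀ J y`. Conjugation by a symplectic `P` transports
this form along `P`, so it would carry the form of `J`, namely `xᵀ x`, which is `1` at a basis
vector, to the form of `M`; but `J M` is symmetric with zero diagonal, so in characteristic `2`
the form of `M` vanishes identically.
-/

open Matrix

/-- `J = [[0,s],[s,0]]` with `s = [[0,1],[1,0]]`, over `𝔽₂`. -/
def Jmat : Matrix (Fin 4) (Fin 4) (ZMod 2) :=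
  !![0, 0, 0, 1; 0, 0, 1, 0; 0, 1, 0, 0; 1, 0, 0, 0]

/-- `M = diag(s,s)` with `s = [[0,1],[1,0]]`, over `𝔽₂`. -/
def Mmat : Matrix (Fin 4) (Fin 4) (ZMod 2) :=
  !![0, 1, 0, 0; 1, 0, 0, 0; 0, 0, 0, 1; 0, 0, 1, 0]

namespace Matrix

variable {n R : Type*} [Fintype n] [CommRing R]

theorem dotProduct_transpose_mul_mul_mulVec (P S : Matrix n n R) (x : n → R) :
    x ⬝ᵥ (Pᵀ * S * P) *ᵥ x = (P *ᵥ x) ⬝ᵥ S *ᵥ (P *ᵥ x) := by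
  rw [← mulVec_mulVec, ← mulVec_mulVec, dotProduct_mulVec, vecMul_transpose]

theorem transpose_mul_mul_mul_eq_one_of_symplectic_conj [DecidableEq n] {J M P : Matrix n n R}
    (hJ : J * J = 1) (hsymp : Pᵀ * J * P = J) (hconj : M * P = P * J) :
    Pᵀ * (J * M) * P = 1 :=
  calc Pᵀ * (J * M) * P = Pᵀ * J * (M * P) := by simp only [mul_assoc]
    _ = (Pᵀ * J * P) * J := by rw [hconj]; simp only [mul_assoc]
    _ = 1 := by rw [hsymp, hJ]

theorem symplectic_conj_ne_of_dotProduct_mul_mulVec_eq_zero [DecidableEq n] [Nonempty n]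
    [Nontrivial R] {J M P : Matrix n n R}
    (hJ : J * J = 1) (hJM : ∀ x, x ⬝ᵥ (J * M) *ᵥ x = 0) (hsymp : Pᵀ * J * P = J) :
    M * P ≠ P * J := by
  intro hconj
  obtain ⟨i⟩ := ‹Nonempty n›
  have hzero := hJM (P *ᵥ Pi.single i 1)
  rw [← dotProduct_transpose_mul_mul_mulVec,
    transpose_mul_mul_mul_eq_one_of_symplectic_conj hJ hsymp hconj, one_mulVec] at hzero
  simp at hzero

end Matrix

theorem Jmat_mul_Jmat : Jmat * Jmat = 1 := by decide

theorem dotProduct_Jmat_mul_Mmat_mulVec (x : Fin 4 → ZMod 2) :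
    x ⬝ᵥ (Jmat * Mmat) *ᵥ x = 0 := by
  revert x; decide

def permJM : GL (Fin 4) (ZMod 2) :=
  ⟨!![1, 0, 0, 0; 0, 0, 0, 1; 0, 1, 0, 0; 0, 0, 1, 0],
    !![1, 0, 0, 0; 0, 0, 1, 0; 0, 0, 0, 1; 0, 1, 0, 0], by decide, by decide⟩

theorem permJM_conj_Jmat :
    (permJM : Matrix (Fin 4) (Fin 4) (ZMod 2)) * Jmat * ((permJM⁻¹ : GL (Fin 4) (ZMod 2)) :
      Matrix (Fin 4) (Fin 4) (ZMod 2)) = Mmat := by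
  decide

/-- `J` and `M` are conjugate in `GL₄(𝔽₂)` but not conjugate by any element of the symplectic
group `Sp₄(𝔽₂)` defined by the form `J`. -/
theorem J_M_conjugate_in_GL4_not_in_Sp4 :
    (∃ P : GL (Fin 4) (ZMod 2),
      (P : Matrix (Fin 4) (Fin 4) (ZMod 2)) * Jmat * ((P⁻¹ : GL (Fin 4) (ZMod 2)) :
        Matrix (Fin 4) (Fin 4) (ZMod 2)) = Mmat) ∧
    ¬ ∃ P : GL (Fin 4) (ZMod 2),
      (P : Matrix (Fin 4) (Fin 4) (ZMod 2))ᵀ * Jmat * (P : Matrix (Fin 4) (Fin 4) (ZMod 2))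
          = Jmat ∧
      (P : Matrix (Fin 4) (Fin 4) (ZMod 2)) * Jmat * ((P⁻¹ : GL (Fin 4) (ZMod 2)) :
        Matrix (Fin 4) (Fin 4) (ZMod 2)) = Mmat := by
  refine ⟨⟨permJM, permJM_conj_Jmat⟩, ?_⟩
  rintro ⟨P, hsymp, hconj⟩
  refine symplectic_conj_ne_of_dotProduct_mul_mulVec_eq_zero Jmat_mul_Jmat
    dotProduct_Jmat_mul_Mmat_mulVec hsymp ?_
  rw [← hconj, Units.inv_mul_cancel_right]
end
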